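/- Let m > 1, S ∈ (0,+∞], let (V, ‖·‖) be a normed vector space, and let Z be a set of functions from [0,S) to V containing the zero function, together with a continuous function F : (0,∞) → ℝ, such that the stability estimate ‖u(t) − v(t)‖ ≤ F(t) ‖u(0) − v(0)‖ holds for every t ∈ (0,S) and all u, v ∈ Z. Let u ∈ Z and λ̄ ∈ (1,2) be such that for every λ ∈ (1,λ̄) the time-scaled function t ↦ λ u(λ^{m−1} t), defined on [0, S/λ^{m−1}), coincides on its domain with (the restriction of) an element of Z. Then for every t₀ ∈ (0,S) and every h with 0 < h < (λ̄^{m−1} − 1) t₀ and t₀ + h < S, one has (1/h) ‖u(t₀+h) − u(t₀)‖ ≤ (2/(m−1)) · (F(t₀)/t₀) · λ̄^{max(2−m, 0)} · ‖u(0)‖. -/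

import Mathlib

open Set Filter
open scoped ENNReal Topology

noncomputable section

lemma key_bernoulli (m lamBar lam : ℝ) (hm : 1 < m) (h1 : 1 < lam) (h2 : lam < lamBar) :
    (m - 1) * (lam - 1) ≤ lamBar ^ (max (2 - m) 0) * (lam ^ (m - 1) - 1) := by
  have hlam0 : (0:ℝ) < lam := by linarith
  rcases le_or_gt 2 m with hm2 | hm2
  · have hmax : max (2 - m) 0 = 0 := max_eq_right (by linarith)
    rw [hmax, Real.rpow_zero, one_mul]
    have hb := one_add_mul_self_le_rpow_one_add (s := lam - 1) (by linarith) (p := m - 1)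
      (by linarith)
    have : (1 : ℝ) + (lam - 1) = lam := by ring
    rw [this] at hb
    linarith
  · have hmax : max (2 - m) 0 = 2 - m := max_eq_left (by linarith)
    rw [hmax]
    have hb := rpow_one_add_le_one_add_mul_self (s := lam - 1) (by linarith) (p := 2 - m)
      (by linarith) (by linarith)
    have he : (1 : ℝ) + (lam - 1) = lam := by ring
    rw [he] at hb
    have hmul : lam ^ (2 - m) * lam ^ (m - 1) = lam := by
      rw [← Real.rpow_add hlam0]; norm_num
    have hle : lam ^ (2 - m) ≤ lamBar ^ (2 - m) :=
      Real.rpow_le_rpow hlam0.le h2.le (by linarith)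
    have hpow1 : 1 < lam ^ (m - 1) :=
      Real.one_lt_rpow_iff_of_pos hlam0 |>.mpr (Or.inl ⟨h1, by linarith⟩)
    have step : (m - 1) * (lam - 1) ≤ lam ^ (2 - m) * (lam ^ (m - 1) - 1) := by
      have : lam ^ (2 - m) * (lam ^ (m - 1) - 1) = lam - lam ^ (2 - m) := by
        rw [mul_sub, hmul]; ring
      rw [this]; linarith
    exact step.trans (mul_le_mul_of_nonneg_right hle (by linarith))

/-- **Abstract time-equicontinuity lemma** (Lemma 5.4): given a class `Z` of curves in a normed
space `V`, defined on `[0,S)` (with `S ∈ (0,∞]`, encoded as `S : ℝ≥0∞`), containing `0`,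
satisfying the stability estimate `‖u(t) - v(t)‖ ≤ F(t) ‖u(0) - v(0)‖`, and such that `u ∈ Z`
admits all the time-scaled curves `λ u(λ^{m-1} ·)` (for `λ ∈ (1, λ̄)`) as restrictions of
elements of `Z`, one gets a quantitative increment bound for `u`. -/
theorem stmt_18 {V : Type*} [NormedAddCommGroup V] [NormedSpace ℝ V]
    (m : ℝ) (hm : 1 < m) (S : ℝ≥0∞) (hS : 0 < S)
    (Z : Set (ℝ → V)) (hZ0 : (0 : ℝ → V) ∈ Z)
    (F : ℝ → ℝ) (hF : ContinuousOn F (Ioi 0))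
    (hstab : ∀ u ∈ Z, ∀ v ∈ Z, ∀ t : ℝ, 0 < t → ENNReal.ofReal t < S →
      ‖u t - v t‖ ≤ F t * ‖u 0 - v 0‖)
    (u : ℝ → V) (hu : u ∈ Z) (lamBar : ℝ) (hl1 : 1 < lamBar) (hl2 : lamBar < 2)
    (hscale : ∀ lam : ℝ, 1 < lam → lam < lamBar →
      ∃ w ∈ Z, ∀ t : ℝ, 0 ≤ t → ENNReal.ofReal (lam ^ (m - 1) * t) < S →
        w t = lam • u (lam ^ (m - 1) * t)) :
    ∀ t₀ : ℝ, 0 < t₀ → ENNReal.ofReal t₀ < S →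
      ∀ h : ℝ, 0 < h → h < (lamBar ^ (m - 1) - 1) * t₀ → ENNReal.ofReal (t₀ + h) < S →
        (1 / h) * ‖u (t₀ + h) - u t₀‖ ≤
          (2 / (m - 1)) * (F t₀ / t₀) * lamBar ^ (max (2 - m) 0) * ‖u 0‖ := by
  intro t₀ ht₀ ht₀S h hh hhlt hthS
  have hm1 : (0:ℝ) < m - 1 := by linarith
  set s : ℝ := h / t₀ with hs_def
  have hs : 0 < s := div_pos hh ht₀
  have h1s : (0:ℝ) < 1 + s := by linarith
  have hsb : 1 + s < lamBar ^ (m - 1) := by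
    have := (div_lt_iff₀ ht₀).mpr hhlt
    simp only [hs_def]; linarith
  set lam : ℝ := (1 + s) ^ (m - 1)⁻¹ with hlam_def
  have hlam1 : 1 < lam :=
    Real.one_lt_rpow_iff_of_pos h1s |>.mpr (Or.inl ⟨by linarith, by positivity⟩)
  have hlam0 : (0:ℝ) < lam := by linarith
  have hlam_pow : lam ^ (m - 1) = 1 + s := by
    rw [hlam_def, ← Real.rpow_mul h1s.le, inv_mul_cancel₀ hm1.ne', Real.rpow_one]
  have hlamBound : lam < lamBar := by
    by_contra hc
    push_neg at hc
    have : lamBar ^ (m - 1) ≤ lam ^ (m - 1) :=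
      Real.rpow_le_rpow (by linarith) hc hm1.le
    rw [hlam_pow] at this
    linarith
  obtain ⟨w, hwZ, hw⟩ := hscale lam hlam1 hlamBound
  have hw0 : w 0 = lam • u 0 := by
    have h0 := hw 0 le_rfl (by simpa using hS)
    simpa using h0
  have ht0h : lam ^ (m - 1) * t₀ = t₀ + h := by
    rw [hlam_pow, hs_def]
    field_simp
  have hwt : w t₀ = lam • u (t₀ + h) := by
    have := hw t₀ ht₀.le (by rw [ht0h]; exact hthS)
    rwa [ht0h] at this
  -- abbreviation
  set A : ℝ := F t₀ * ‖u 0‖ with hA_def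
  have hA0 : 0 ≤ A := by
    have h0 := hstab u hu 0 hZ0 t₀ ht₀ ht₀S
    simp only [Pi.zero_apply, sub_zero] at h0
    exact (norm_nonneg _).trans h0
  have hnorm_sm : ∀ x : V, ‖lam • x - x‖ = (lam - 1) * ‖x‖ := by
    intro x
    rw [show lam • x - x = (lam - 1) • x by rw [sub_smul, one_smul]]
    rw [norm_smul, Real.norm_eq_abs, abs_of_pos (by linarith)]
  have hstab1 := hstab w hwZ u hu t₀ ht₀ ht₀S
  rw [hwt, hw0] at hstab1
  have hstab2 := hstab w hwZ 0 hZ0 t₀ ht₀ ht₀S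
  simp only [Pi.zero_apply, sub_zero] at hstab2
  rw [hwt, hw0] at hstab2
  rw [norm_smul, norm_smul, Real.norm_eq_abs, abs_of_pos hlam0] at hstab2
  have huh : ‖u (t₀ + h)‖ ≤ A := by
    rw [hA_def]
    nlinarith [hstab2]
  have hst1' : ‖lam • u (t₀ + h) - u t₀‖ ≤ (lam - 1) * A := by
    rw [hnorm_sm (u 0)] at hstab1
    rw [hA_def]
    calc ‖lam • u (t₀ + h) - u t₀‖ ≤ F t₀ * ((lam - 1) * ‖u 0‖) := hstab1
      _ = (lam - 1) * (F t₀ * ‖u 0‖) := by ring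
  have hmain : ‖u (t₀ + h) - u t₀‖ ≤ 2 * (lam - 1) * A := by
    have hsplit : u (t₀ + h) - u t₀
        = (lam • u (t₀ + h) - u t₀) - (lam • u (t₀ + h) - u (t₀ + h)) := by abel
    calc ‖u (t₀ + h) - u t₀‖
        ≤ ‖lam • u (t₀ + h) - u t₀‖ + ‖lam • u (t₀ + h) - u (t₀ + h)‖ := by
          rw [hsplit]; exact norm_sub_le _ _
      _ ≤ (lam - 1) * A + (lam - 1) * ‖u (t₀ + h)‖ := by
          gcongr
          rw [hnorm_sm]
      _ ≤ (lam - 1) * A + (lam - 1) * A := by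
          gcongr
      _ = 2 * (lam - 1) * A := by ring
  set B : ℝ := lamBar ^ (max (2 - m) 0) with hB_def
  have hB0 : 0 < B := Real.rpow_pos_of_pos (by linarith) _
  have hk := key_bernoulli m lamBar lam hm hlam1 hlamBound
  rw [hlam_pow] at hk
  -- hk : (m-1)*(lam-1) ≤ B * (1 + s - 1) = B * (h/t₀)
  have hlam_le : lam - 1 ≤ B * h / ((m - 1) * t₀) := by
    rw [le_div_iff₀ (by positivity)]
    have hBs : B * (1 + s - 1) = B * h / t₀ := by
      rw [hs_def]; ring
    rw [hBs] at hk
    have := mul_le_mul_of_nonneg_right hk ht₀.le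
    have heq : B * h / t₀ * t₀ = B * h := by field_simp
    rw [heq] at this
    nlinarith
  calc (1 / h) * ‖u (t₀ + h) - u t₀‖
      ≤ (1 / h) * (2 * (lam - 1) * A) := by
        gcongr
      _ ≤ (1 / h) * (2 * (B * h / ((m - 1) * t₀)) * A) := by
        gcongr
      _ = (2 / (m - 1)) * (F t₀ / t₀) * B * ‖u 0‖ := by
        rw [hA_def]
        field_simp
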